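/- Lemma 3.2(f): let α ∈ (0,1), γ ≥ 1, T > 0, N ≥ 1, and let the mesh be graded, t_n = (n/N)^γ T for 0 ≤ n ≤ N. Then for every 1 ≤ n ≤ N, Σ_{j=1}^{n} P^{n,j}_α · t_j^{−α} ≤ 4 e^γ · ln(n+2). -/

import Mathlib

/-
The recursion defining `P^{n,·}` makes it the inverse of the lower-triangular matrix `K^{·,·}`:
`Σ_{j=i}^{n} P^{n,j} K^{j,i} = 1`, and `P^{n,j} ≥ 0` because `K^{j,i}` increases in `i`
(concavity of `s ↦ s^{1-α}`). Telescoping gives `Σ_{i≤j} Δt_i K^{j,i} = t_j^{1-α}/Γ(2-α)`, so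
`t_j^{-α} ≤ Γ(2-α) Σ_{i≤j} (Δt_i/t_i) K^{j,i}`; multiplying by `P^{n,j}`, summing and swapping the
sums yields `Σ_j P^{n,j} t_j^{-α} ≤ Σ_{i≤n} Δt_i/t_i`, as `Γ(2-α) ≤ 1`. On the graded mesh
Bernoulli's inequality gives `Δt_i/t_i ≤ γ/i`, and the harmonic sum is at most `1 + ln n`.
-/

open Finset

/-- The kernel `k_β(s) = s^(β-1)/Γ(β)`. -/
noncomputable def kker (β s : ℝ) : ℝ := s ^ (β - 1) / Real.Gamma β

/-- The discrete L1 kernels `K^{n,j}_{1-α}`. -/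
noncomputable def Kd (α : ℝ) (t : ℕ → ℝ) (n j : ℕ) : ℝ :=
  (kker (2 - α) (t n - t (j - 1)) - kker (2 - α) (t n - t j)) / (t j - t (j - 1))

/-- The complementary discrete kernels `P^{n,i}_α`, defined by downward recursion. -/
noncomputable def Pd (α : ℝ) (t : ℕ → ℝ) (n i : ℕ) : ℝ :=
  if i = n then 1 / Kd α t n n
  else (1 / Kd α t i i) *
    ∑ j ∈ (Finset.Ioc i n).attach,
      Pd α t n j.1 * (Kd α t j.1 (i + 1) - Kd α t j.1 i)
termination_by n - i
decreasing_by
  have h := Finset.mem_Ioc.mp j.2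
  omega

open Real

lemma sum_Icc_one_sub_eq (g : ℕ → ℝ) (j : ℕ) :
    ∑ i ∈ Icc 1 j, (g (i - 1) - g i) = g 0 - g j := by
  rw [← Ico_add_one_right_eq_Icc, sum_Ico_eq_sum_range, Nat.add_sub_cancel]
  simpa [add_comm 1] using sum_range_sub' g j

section Kernels

variable {α : ℝ} {t : ℕ → ℝ}

lemma Pd_self (n : ℕ) : Pd α t n n = 1 / Kd α t n n := by
  rw [Pd, if_pos rfl]

lemma Pd_of_ne {n i : ℕ} (h : i ≠ n) :
    Pd α t n i = 1 / Kd α t i i *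
      ∑ j ∈ Ioc i n, Pd α t n j * (Kd α t j (i + 1) - Kd α t j i) := by
  rw [Pd, if_neg h, sum_attach (Ioc i n) fun j => Pd α t n j * (Kd α t j (i + 1) - Kd α t j i)]

theorem sum_Pd_mul_Kd_eq_one {n : ℕ} (hK : ∀ k, 1 ≤ k → k ≤ n → Kd α t k k ≠ 0)
    {i : ℕ} (hi : 1 ≤ i) (hin : i ≤ n) :
    ∑ j ∈ Icc i n, Pd α t n j * Kd α t j i = 1 := by
  obtain rfl | hlt := hin.eq_or_lt
  · rw [Icc_self, sum_singleton, Pd_self, one_div_mul_cancel (hK i hi le_rfl)]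
  have hdiag : Pd α t n i * Kd α t i i
      = ∑ j ∈ Ioc i n, Pd α t n j * (Kd α t j (i + 1) - Kd α t j i) := by
    rw [Pd_of_ne hlt.ne, mul_comm, ← mul_assoc, mul_one_div_cancel (hK i hi hin), one_mul]
  calc ∑ j ∈ Icc i n, Pd α t n j * Kd α t j i
      = Pd α t n i * Kd α t i i + ∑ j ∈ Ioc i n, Pd α t n j * Kd α t j i := by
        rw [Icc_eq_cons_Ioc hin, sum_cons]
    _ = ∑ j ∈ Icc (i + 1) n, Pd α t n j * Kd α t j (i + 1) := by
        rw [hdiag, ← sum_add_distrib, Icc_add_one_left_eq_Ioc]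
        exact sum_congr rfl fun j _ => by ring
    _ = 1 := sum_Pd_mul_Kd_eq_one hK (by omega) hlt
termination_by n - i

theorem Pd_nonneg {n : ℕ} (hKpos : ∀ k, 1 ≤ k → k ≤ n → 0 < Kd α t k k)
    (hKmono : ∀ i j, 1 ≤ i → i < j → j ≤ n → Kd α t j i ≤ Kd α t j (i + 1))
    {i : ℕ} (hi : 1 ≤ i) (hin : i ≤ n) : 0 ≤ Pd α t n i := by
  obtain rfl | hlt := hin.eq_or_lt
  · rw [Pd_self]
    exact (one_div_pos.mpr (hKpos i hi le_rfl)).le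
  rw [Pd_of_ne hlt.ne]
  refine mul_nonneg (one_div_pos.mpr (hKpos i hi hin)).le (sum_nonneg fun j hj => ?_)
  obtain ⟨hij, hjn⟩ := mem_Ioc.mp hj
  exact mul_nonneg (Pd_nonneg hKpos hKmono (hi.trans hij.le) hjn)
    (sub_nonneg.mpr (hKmono i j hi hij hjn))
termination_by n - i

lemma Kd_eq (j i : ℕ) :
    Kd α t j i = ((t j - t (i - 1)) ^ (1 - α) - (t j - t i) ^ (1 - α))
      / (t i - t (i - 1)) / Gamma (2 - α) := by
  rw [Kd, kker, kker, show 2 - α - 1 = 1 - α by ring, div_sub_div_same, div_right_comm]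

lemma Kd_self_pos (hα : α < 1) (ht : StrictMono t) {i : ℕ} (hi : 1 ≤ i) : 0 < Kd α t i i := by
  have hΔ : 0 < t i - t (i - 1) := sub_pos.mpr (ht (by omega))
  rw [Kd_eq, sub_self, zero_rpow (by linarith), sub_zero]
  exact div_pos (div_pos (rpow_pos_of_pos hΔ _) hΔ) (Gamma_pos_of_pos (by linarith))

lemma Kd_nonneg (hα : α < 1) (ht : Monotone t) {i j : ℕ} (hij : i ≤ j) : 0 ≤ Kd α t j i := by
  rw [Kd_eq]
  have hle : t j - t i ≤ t j - t (i - 1) := by linarith [ht (Nat.sub_le i 1)]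
  refine div_nonneg (div_nonneg ?_ (sub_nonneg.mpr (ht (Nat.sub_le i 1))))
    (Gamma_pos_of_pos (by linarith)).le
  exact sub_nonneg.mpr (rpow_le_rpow (sub_nonneg.mpr (ht hij)) hle (by linarith))

/-- Concavity of `s ↦ s^{1-α}`: its chord slopes over the adjacent intervals
`[t_j - t_{i+1}, t_j - t_i]` and `[t_j - t_i, t_j - t_{i-1}]` decrease. -/
lemma Kd_le_Kd_succ (hα₀ : 0 ≤ α) (hα₁ : α ≤ 1) (ht : StrictMono t) {i j : ℕ} (hi : 1 ≤ i)
    (hij : i < j) : Kd α t j i ≤ Kd α t j (i + 1) := by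
  rw [Kd_eq, Kd_eq, Nat.add_sub_cancel]
  have hslope := (concaveOn_rpow (p := 1 - α) (by linarith) (by linarith)).slope_anti_adjacent
    (x := t j - t (i + 1)) (y := t j - t i) (z := t j - t (i - 1))
    (sub_nonneg.mpr (ht.monotone hij)) (sub_nonneg.mpr (ht.monotone (by omega)))
    (by linarith [ht (Nat.lt_succ_self i)]) (by linarith [ht (show i - 1 < i by omega)])
  rw [show t j - t (i - 1) - (t j - t i) = t i - t (i - 1) by ring,
    show t j - t i - (t j - t (i + 1)) = t (i + 1) - t i by ring] at hslope
  exact div_le_div_of_nonneg_right hslope (Gamma_pos_of_pos (by linarith)).le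

lemma sum_sub_mul_Kd (hα : α < 1) (ht : StrictMono t) (ht₀ : t 0 = 0) (j : ℕ) :
    ∑ i ∈ Icc 1 j, (t i - t (i - 1)) * Kd α t j i = t j ^ (1 - α) / Gamma (2 - α) := by
  have hterm : ∀ i ∈ Icc 1 j, (t i - t (i - 1)) * Kd α t j i
      = kker (2 - α) (t j - t (i - 1)) - kker (2 - α) (t j - t i) := fun i hi => by
    rw [Kd, mul_div_cancel₀ _ (sub_pos.mpr (ht (Nat.sub_lt (mem_Icc.mp hi).1 one_pos))).ne']
  rw [sum_congr rfl hterm, sum_Icc_one_sub_eq (fun i => kker (2 - α) (t j - t i)), kker, kker,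
    ht₀, sub_zero, sub_self, show 2 - α - 1 = 1 - α by ring, zero_rpow (by linarith), zero_div,
    sub_zero]

lemma rpow_neg_div_Gamma_le (hα : α < 1) (ht : StrictMono t) (ht₀ : t 0 = 0) {j : ℕ}
    (hj : 1 ≤ j) :
    t j ^ (-α) / Gamma (2 - α) ≤ ∑ i ∈ Icc 1 j, (t i - t (i - 1)) / t i * Kd α t j i := by
  have htj : 0 < t j := ht₀ ▸ ht (by omega)
  calc t j ^ (-α) / Gamma (2 - α)
      = ∑ i ∈ Icc 1 j, (t i - t (i - 1)) / t j * Kd α t j i := by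
        simp_rw [div_mul_eq_mul_div, ← sum_div, sum_sub_mul_Kd hα ht ht₀, div_right_comm,
          sub_eq_add_neg (1 : ℝ), rpow_add htj, rpow_one]
        field_simp
    _ ≤ _ := sum_le_sum fun i hi => by
        obtain ⟨hi1, hij⟩ := mem_Icc.mp hi
        have hti : 0 < t i := ht₀ ▸ ht (by omega)
        gcongr
        · exact Kd_nonneg hα ht.monotone hij
        · exact sub_nonneg.mpr (ht.monotone (Nat.sub_le i 1))
        · exact ht.monotone hij

end Kernels

lemma Gamma_two_sub_le_one {α : ℝ} (hα₀ : 0 ≤ α) (hα₁ : α ≤ 1) : Gamma (2 - α) ≤ 1 := by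
  have h := convexOn_Gamma.2 (Set.mem_Ioi.mpr one_pos) (Set.mem_Ioi.mpr two_pos) hα₀
    (sub_nonneg.mpr hα₁) (add_sub_cancel α 1)
  rw [smul_eq_mul, smul_eq_mul, smul_eq_mul, smul_eq_mul, Gamma_one, Gamma_two,
    show α * 1 + (1 - α) * 2 = 2 - α by ring] at h
  linarith

theorem sum_Pd_mul_rpow_neg_le {α : ℝ} {t : ℕ → ℝ} (hα₀ : 0 ≤ α) (hα₁ : α < 1)
    (ht : StrictMono t) (ht₀ : t 0 = 0) (n : ℕ) :
    ∑ j ∈ Icc 1 n, Pd α t n j * t j ^ (-α) ≤ ∑ i ∈ Icc 1 n, (t i - t (i - 1)) / t i := by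
  have hKpos : ∀ k, 1 ≤ k → k ≤ n → 0 < Kd α t k k := fun k hk _ => Kd_self_pos hα₁ ht hk
  have hKmono : ∀ i j, 1 ≤ i → i < j → j ≤ n → Kd α t j i ≤ Kd α t j (i + 1) :=
    fun i j hi hij _ => Kd_le_Kd_succ hα₀ hα₁.le ht hi hij
  have hΓ : 0 < Gamma (2 - α) := Gamma_pos_of_pos (by linarith)
  set c : ℕ → ℝ := fun i => (t i - t (i - 1)) / t i
  calc ∑ j ∈ Icc 1 n, Pd α t n j * t j ^ (-α)
      ≤ ∑ j ∈ Icc 1 n, Pd α t n j * (Gamma (2 - α) * ∑ i ∈ Icc 1 j, c i * Kd α t j i) := by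
        gcongr with j hj
        · exact Pd_nonneg hKpos hKmono (mem_Icc.mp hj).1 (mem_Icc.mp hj).2
        · exact (div_le_iff₀' hΓ).mp (rpow_neg_div_Gamma_le hα₁ ht ht₀ (mem_Icc.mp hj).1)
    _ = Gamma (2 - α) * ∑ j ∈ Icc 1 n, ∑ i ∈ Icc 1 j, c i * (Pd α t n j * Kd α t j i) := by
        simp_rw [mul_sum]
        exact sum_congr rfl fun j _ => sum_congr rfl fun i _ => by ring
    _ = Gamma (2 - α) * ∑ i ∈ Icc 1 n, c i * ∑ j ∈ Icc i n, Pd α t n j * Kd α t j i := by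
        rw [sum_comm' (t' := Icc 1 n) (s' := fun i => Icc i n)
          (h := fun j i => by simp only [mem_Icc]; omega)]
        simp_rw [mul_sum]
    _ = Gamma (2 - α) * ∑ i ∈ Icc 1 n, c i := by
        refine congrArg _ (sum_congr rfl fun i hi => ?_)
        rw [sum_Pd_mul_Kd_eq_one (fun k hk hkn => (hKpos k hk hkn).ne') (mem_Icc.mp hi).1
          (mem_Icc.mp hi).2, mul_one]
    _ ≤ ∑ i ∈ Icc 1 n, c i := by
        refine mul_le_of_le_one_left (sum_nonneg fun i _ => ?_)
          (Gamma_two_sub_le_one hα₀ hα₁.le)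
        exact div_nonneg (sub_nonneg.mpr (ht.monotone (Nat.sub_le i 1)))
          (ht₀ ▸ ht.monotone (Nat.zero_le i))

noncomputable def gradedMesh (γ T : ℝ) (N n : ℕ) : ℝ := ((n : ℝ) / N) ^ γ * T

section GradedMesh

variable {γ T : ℝ} {N : ℕ}

lemma gradedMesh_zero (hγ : γ ≠ 0) : gradedMesh γ T N 0 = 0 := by
  simp [gradedMesh, zero_rpow hγ]

lemma gradedMesh_strictMono (hγ : 0 < γ) (hT : 0 < T) (hN : 0 < N) :
    StrictMono (gradedMesh γ T N) := fun a b hab => by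
  unfold gradedMesh
  gcongr

lemma gradedMesh_sub_div_le (hγ : 1 ≤ γ) (hT : T ≠ 0) (hN : N ≠ 0) {i : ℕ} (hi : 1 ≤ i) :
    (gradedMesh γ T N i - gradedMesh γ T N (i - 1)) / gradedMesh γ T N i ≤ γ / i := by
  have hi' : (1 : ℝ) ≤ i := by exact_mod_cast hi
  have hratio : gradedMesh γ T N (i - 1) / gradedMesh γ T N i = (1 + -(1 / i)) ^ γ := by
    rw [gradedMesh, gradedMesh, mul_div_mul_right _ _ hT,
      ← div_rpow (by positivity) (by positivity), Nat.cast_sub hi, Nat.cast_one]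
    congr 1
    field_simp
    ring
  have hbernoulli := one_add_mul_self_le_rpow_one_add (s := -(1 / i))
    (by linarith [div_le_one_of_le₀ hi' (by linarith : (0 : ℝ) ≤ i)]) hγ
  have hpos : gradedMesh γ T N i ≠ 0 := mul_ne_zero (rpow_pos_of_pos (by positivity) _).ne' hT
  rw [sub_div, div_self hpos, hratio, ← mul_one_div γ]
  linarith

end GradedMesh

lemma mul_one_add_log_le (γ : ℝ) {x : ℝ} (hx : 1 ≤ x) :
    γ * (1 + log x) ≤ 4 * exp γ * log (x + 2) := by
  have h1 : 1 ≤ log (x + 2) := by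
    rw [le_log_iff_exp_le (by linarith)]
    linarith [exp_one_lt_d9]
  have h2 : log x ≤ log (x + 2) := log_le_log (by linarith) (by linarith)
  calc γ * (1 + log x) ≤ exp γ * (1 + log x) :=
        mul_le_mul_of_nonneg_right (by linarith [add_one_le_exp γ]) (by linarith [log_nonneg hx])
    _ ≤ exp γ * (4 * log (x + 2)) := by gcongr; linarith
    _ = 4 * exp γ * log (x + 2) := by ring

theorem complementary_kernel_log_bound_general
    (α γ T : ℝ) (N : ℕ) (t : ℕ → ℝ)
    (hα0 : 0 < α) (hα1 : α < 1) (hγ : 1 ≤ γ) (hT : 0 < T)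
    (ht : ∀ n, t n = ((n : ℝ) / (N : ℝ)) ^ γ * T) :
    ∀ n, 1 ≤ n → n ≤ N →
      ∑ j ∈ Finset.Icc 1 n, Pd α t n j * t j ^ (-α)
        ≤ 4 * Real.exp γ * Real.log ((n : ℝ) + 2) := by
  intro n hn hnN
  obtain rfl : t = gradedMesh γ T N := funext ht
  have hN : 0 < N := hn.trans hnN
  calc ∑ j ∈ Icc 1 n, Pd α (gradedMesh γ T N) n j * gradedMesh γ T N j ^ (-α)
      ≤ ∑ i ∈ Icc 1 n, (gradedMesh γ T N i - gradedMesh γ T N (i - 1)) / gradedMesh γ T N i :=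
        sum_Pd_mul_rpow_neg_le hα0.le hα1 (gradedMesh_strictMono (by linarith) hT hN)
          (gradedMesh_zero (by linarith)) n
    _ ≤ ∑ i ∈ Icc 1 n, γ * (i : ℝ)⁻¹ := sum_le_sum fun i hi =>
        (gradedMesh_sub_div_le hγ hT.ne' hN.ne' (mem_Icc.mp hi).1).trans_eq (div_eq_mul_inv _ _)
    _ = γ * harmonic n := by
        rw [← mul_sum, harmonic_eq_sum_Icc]
        push_cast
        rfl
    _ ≤ γ * (1 + log n) := by
        gcongr
        exact harmonic_le_one_add_log n
    _ ≤ 4 * exp γ * log (n + 2) := mul_one_add_log_le γ (by exact_mod_cast hn)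

/-- Lemma 3.2(f): on the graded mesh `t_n = (n/N)^γ T`,
`Σ_{j=1}^{n} P^{n,j}_α t_j^{-α} ≤ 4 e^γ ln(n+2)` for every `1 ≤ n ≤ N`. -/
theorem complementary_kernel_log_bound
    (α γ T : ℝ) (N : ℕ) (t : ℕ → ℝ)
    (hα0 : 0 < α) (hα1 : α < 1) (hγ : 1 ≤ γ) (hT : 0 < T) (hN : 1 ≤ N)
    (ht : ∀ n, t n = ((n : ℝ) / (N : ℝ)) ^ γ * T) :
    ∀ n, 1 ≤ n → n ≤ N →
      ∑ j ∈ Finset.Icc 1 n, Pd α t n j * t j ^ (-α)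
        ≤ 4 * Real.exp γ * Real.log ((n : ℝ) + 2) :=
  complementary_kernel_log_bound_general α γ T N t hα0 hα1 hγ hT ht
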